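/- For the infinitesimal pairing on the algebra of planar forests, the dual basis satisfies: for all trees t_1, …, t_n, f_{t_1 t_2 … t_n} = f_{t_n} ↗ f_{t_{n−1}} ↗ … ↗ f_{t_1}, where ↗ is the left-leaf grafting product extended linearly. -/

import Mathlib

open scoped TensorProduct

/-- Planar rooted trees; `PTree.node []` is the single-vertex tree `•`. -/
inductive PTree : Type
  | node : List PTree → PTree

/-- Planar rooted forests. -/
abbrev Forest : Type := List PTree

instance : Monoid Forest where
  mul := fun x y => List.append x y
  one := ([] : List PTree)
  mul_assoc := List.append_assoc
  one_mul := fun _ => rfl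
  mul_one := List.append_nil

/-- The infinitesimal Hopf algebra `H` of planar rooted forests. -/
abbrev H : Type := MonoidAlgebra ℚ Forest

/-- The basis element of `H` indexed by a forest. -/
noncomputable def bf (F : Forest) : H := MonoidAlgebra.of ℚ Forest F

/-- The operator `B⁺` grafting a forest on a common new root, extended linearly. -/
noncomputable def Bplus : H →ₗ[ℚ] H :=
  (Finsupp.lift H ℚ Forest fun F => bf [PTree.node F]) ∘ₗ (MonoidAlgebra.coeffLinearEquiv ℚ).toLinearMap

/-- The map `γ`: `t_1…t_n ↦ δ_{t_1,•} t_2…t_n`, extended linearly. -/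
noncomputable def gammaH : H →ₗ[ℚ] H :=
  (Finsupp.lift H ℚ Forest fun F =>
    match F with
    | PTree.node [] :: rest => bf rest
    | _ => 0) ∘ₗ (MonoidAlgebra.coeffLinearEquiv ℚ).toLinearMap

/-- Grafting on the left leaf. -/
def graftLeaf (F : Forest) : Forest → Forest
  | [] => F
  | .node c :: rest => .node (graftLeaf F c) :: rest

/-- The product `↗` extended bilinearly to `H`. -/
noncomputable def glH : H →ₗ[ℚ] H →ₗ[ℚ] H :=
  (Finsupp.lift (H →ₗ[ℚ] H) ℚ Forest fun F =>
    (Finsupp.lift H ℚ Forest fun G => bf (graftLeaf F G)) ∘ₗ (MonoidAlgebra.coeffLinearEquiv ℚ).toLinearMap) ∘ₗ (MonoidAlgebra.coeffLinearEquiv ℚ).toLinearMap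

/-! Let `λ_t` delete a final tree `t` from a forest (and kill forests that do not end in `t`).
Left grafting by `f_t` is adjoint to `λ_t`: `⟨f_t ↗ x, y⟩ = ⟨x, λ_t y⟩`. For a forest
`x = B⁺(c) w` this follows by recursion on `c` from `⟨B⁺(c) w, y⟩ = ⟨w ⊗ c, (id ⊗ γ) Δ y⟩`
and the fact that `id ⊗ λ_t` commutes with `(id ⊗ γ) ∘ Δ`, which in turn comes from the
infinitesimal Leibniz rule for `Δ` and `γ (B⁺(c) z) = ε(c) z`. Hence `f_t ↗ −` sends the dual
vector of `F` to that of `F t`, so `f_{t_n} ↗ ⋯ ↗ f_{t_1}` and `f_{t_1 ⋯ t_n}` pair identically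
with every forest, and nondegeneracy identifies them. -/

open scoped Classical

theorem linearMap_ext_bf {M : Type*} [AddCommMonoid M] [Module ℚ M] {φ ψ : H →ₗ[ℚ] M}
    (h : ∀ F, φ (bf F) = ψ (bf F)) : φ = ψ :=
  MonoidAlgebra.lhom_ext' fun F => LinearMap.ext_ring (h F)

theorem lift_comp_coeffLinearEquiv_bf {M : Type*} [AddCommMonoid M] [Module ℚ M]
    (g : Forest → M) (F : Forest) :
    (Finsupp.lift M ℚ Forest g ∘ₗ (MonoidAlgebra.coeffLinearEquiv ℚ).toLinearMap) (bf F) = g F := by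
  simp [bf, MonoidAlgebra.of_apply, Finsupp.sum_single_index]

theorem bf_nil : bf [] = 1 := rfl

theorem bf_append (F G : Forest) : bf (F ++ G) = bf F * bf G :=
  map_mul (MonoidAlgebra.of ℚ Forest) F G

theorem Bplus_bf (F : Forest) : Bplus (bf F) = bf [.node F] :=
  lift_comp_coeffLinearEquiv_bf _ _

theorem bf_node_cons (c R : Forest) : bf (.node c :: R) = Bplus (bf c) * bf R := by
  rw [Bplus_bf, ← bf_append]
  rfl

theorem gammaH_bf (F : Forest) :
    gammaH (bf F) = match F with | .node [] :: rest => bf rest | _ => 0 :=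
  lift_comp_coeffLinearEquiv_bf _ _

theorem gammaH_one : gammaH 1 = 0 := gammaH_bf []

theorem glH_bf (F G : Forest) : glH (bf F) (bf G) = bf (graftLeaf F G) := by
  rw [glH, lift_comp_coeffLinearEquiv_bf, lift_comp_coeffLinearEquiv_bf]

theorem glH_one (a : H) : glH a 1 = a := by
  have h : glH.flip 1 = LinearMap.id := linearMap_ext_bf fun F => by
    rw [LinearMap.flip_apply, ← bf_nil, glH_bf, graftLeaf, LinearMap.id_apply]
  exact LinearMap.congr_fun h a

noncomputable def counitH : H →ₗ[ℚ] ℚ :=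
  Finsupp.lapply 1 ∘ₗ (MonoidAlgebra.coeffLinearEquiv ℚ).toLinearMap

theorem counitH_apply (x : H) : counitH x = x.coeff 1 := rfl

theorem counitH_bf (F : Forest) : counitH (bf F) = if F = [] then 1 else 0 := by
  rw [counitH_apply, bf, MonoidAlgebra.of_apply, MonoidAlgebra.coeff_single, Finsupp.single_apply]
  simp only [eq_comm]
  rfl

theorem gammaH_Bplus_mul (x z : H) : gammaH (Bplus x * z) = counitH x • z := by
  have hbasis (F : Forest) :
      gammaH ∘ₗ LinearMap.mulLeft ℚ (Bplus (bf F)) = counitH (bf F) • LinearMap.id :=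
    linearMap_ext_bf fun G => by
      cases F <;> simp [Bplus_bf, ← bf_append, gammaH_bf, counitH_bf]
  have h : gammaH ∘ₗ LinearMap.mulRight ℚ z ∘ₗ Bplus = counitH.smulRight z :=
    linearMap_ext_bf fun F => LinearMap.congr_fun (hbasis F) z
  exact LinearMap.congr_fun h x

theorem glH_bf_cons (a : H) (c rest : Forest) :
    glH a (bf (.node c :: rest)) = Bplus (glH a (bf c)) * bf rest := by
  have h : glH.flip (bf (.node c :: rest))
      = LinearMap.mulRight ℚ (bf rest) ∘ₗ Bplus ∘ₗ glH.flip (bf c) :=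
    linearMap_ext_bf fun F => by
      simp only [LinearMap.flip_apply, LinearMap.comp_apply, LinearMap.mulRight_apply, glH_bf,
        Bplus_bf, ← bf_append, graftLeaf]
      rfl
  exact LinearMap.congr_fun h a

noncomputable def dropLastTree (t : PTree) : H →ₗ[ℚ] H :=
  Finsupp.lift H ℚ Forest (fun G => if G.getLast? = some t then bf G.dropLast else 0) ∘ₗ
    (MonoidAlgebra.coeffLinearEquiv ℚ).toLinearMap

theorem dropLastTree_bf_append_singleton (t t' : PTree) (G : Forest) :
    dropLastTree t (bf (G ++ [t'])) = if t' = t then bf G else 0 := by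
  simp [dropLastTree, lift_comp_coeffLinearEquiv_bf]

theorem dropLastTree_one (t : PTree) : dropLastTree t 1 = 0 := by
  simp [dropLastTree, ← bf_nil, lift_comp_coeffLinearEquiv_bf]

theorem dropLastTree_bf_append (t : PTree) (F : Forest) {G : Forest} (hG : G ≠ []) :
    dropLastTree t (bf (F ++ G)) = bf F * dropLastTree t (bf G) := by
  obtain ⟨G, t', rfl⟩ := (List.eq_nil_or_concat G).resolve_left hG
  simp only [List.concat_eq_append, ← List.append_assoc, dropLastTree_bf_append_singleton]
  split_ifs <;> simp [bf_append]

theorem dropLastTree_dual {φ : H →ₗ[ℚ] ℚ} {F : Forest}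
    (hφ : ∀ G, φ (bf G) = if F = G then 1 else 0) (t : PTree) (G : Forest) :
    φ (dropLastTree t (bf G)) = if F ++ [t] = G then 1 else 0 := by
  rcases List.eq_nil_or_concat G with rfl | ⟨G, t', rfl⟩
  · rw [bf_nil, dropLastTree_one, map_zero, if_neg (by simp)]
  · simp only [List.concat_eq_append, dropLastTree_bf_append_singleton, List.append_singleton_inj]
    rcases eq_or_ne t' t with rfl | ht
    · simp [hφ]
    · simp [ht, ht.symm]

theorem map_one_of_infinitesimal {R A : Type*} [CommRing R] [Ring A] [Algebra R A]
    {Δ : A →ₗ[R] A ⊗[R] A}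
    (hΔm : ∀ x y : A, Δ (x * y) = (x ⊗ₜ (1 : A)) * Δ y + Δ x * ((1 : A) ⊗ₜ y) - x ⊗ₜ y) :
    Δ 1 = 1 ⊗ₜ 1 := by
  have h := hΔm 1 1
  rw [mul_one, ← Algebra.TensorProduct.one_def, one_mul, mul_one, add_sub_assoc,
    left_eq_add, sub_eq_zero] at h
  exact h.trans Algebra.TensorProduct.one_def

theorem lTensor_tmul_one_mul {R A B C : Type*} [CommSemiring R] [Semiring A] [Algebra R A]
    [Semiring B] [Algebra R B] [Semiring C] [Algebra R C] (g : B →ₗ[R] C) (s : A) (w : A ⊗[R] B) :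
    LinearMap.lTensor A g ((s ⊗ₜ 1) * w) = (s ⊗ₜ 1) * LinearMap.lTensor A g w := by
  induction w using TensorProduct.induction_on with
  | zero => simp
  | tmul a b => simp
  | add u v hu hv => rw [mul_add, map_add, hu, hv, map_add, mul_add]

theorem lift_smulRight_comp {R M N N' P : Type*} [CommSemiring R] [AddCommMonoid M] [Module R M]
    [AddCommMonoid N] [Module R N] [AddCommMonoid N'] [Module R N'] [AddCommMonoid P] [Module R P]
    (φ : M →ₗ[R] R) (ψ : N →ₗ[R] P) (g : N' →ₗ[R] N) :
    TensorProduct.lift (φ.smulRight (ψ ∘ₗ g))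
      = TensorProduct.lift (φ.smulRight ψ) ∘ₗ LinearMap.lTensor M g :=
  TensorProduct.ext' fun _ _ => by simp

theorem lTensor_gammaH_lTensor_Bplus_mul (w : H ⊗[ℚ] H) (z : H) :
    LinearMap.lTensor H gammaH (LinearMap.lTensor H Bplus w * (1 ⊗ₜ z))
      = LinearMap.lTensor H (counitH.smulRight z) w := by
  induction w using TensorProduct.induction_on with
  | zero => simp
  | tmul a b => simp [gammaH_Bplus_mul]
  | add u v hu hv => rw [map_add, add_mul, map_add, hu, hv, map_add]

noncomputable def gammaCoproduct (Δ : H →ₗ[ℚ] H ⊗[ℚ] H) : H →ₗ[ℚ] H ⊗[ℚ] H :=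
  LinearMap.lTensor H gammaH ∘ₗ Δ

section Coproduct

variable {Δ : H →ₗ[ℚ] H ⊗[ℚ] H}
  (hΔm : ∀ x y : H, Δ (x * y) = (x ⊗ₜ (1 : H)) * Δ y + Δ x * ((1 : H) ⊗ₜ y) - x ⊗ₜ y)
  (hΔB : ∀ x : H, Δ (Bplus x) = (Bplus x) ⊗ₜ 1 + (LinearMap.lTensor H Bplus) (Δ x))

include hΔm

theorem gammaCoproduct_one : gammaCoproduct Δ 1 = 0 := by
  rw [gammaCoproduct, LinearMap.comp_apply, map_one_of_infinitesimal hΔm, LinearMap.lTensor_tmul,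
    gammaH_one, TensorProduct.tmul_zero]

include hΔB

theorem gammaCoproduct_Bplus_mul (x z : H) :
    gammaCoproduct Δ (Bplus x * z)
      = (Bplus x ⊗ₜ 1) * gammaCoproduct Δ z + LinearMap.lTensor H (counitH.smulRight z) (Δ x) := by
  have hΔ : Δ (Bplus x * z)
      = (Bplus x ⊗ₜ 1) * Δ z + LinearMap.lTensor H Bplus (Δ x) * (1 ⊗ₜ z) := by
    rw [hΔm, hΔB, add_mul, Algebra.TensorProduct.tmul_mul_tmul, mul_one, one_mul]
    abel
  rw [gammaCoproduct, LinearMap.comp_apply, LinearMap.comp_apply, hΔ, map_add,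
    lTensor_tmul_one_mul, lTensor_gammaH_lTensor_Bplus_mul]

theorem lTensor_dropLastTree_comp_gammaCoproduct (t : PTree) :
    LinearMap.lTensor H (dropLastTree t) ∘ₗ gammaCoproduct Δ
      = gammaCoproduct Δ ∘ₗ dropLastTree t := by
  refine linearMap_ext_bf fun G => ?_
  simp only [LinearMap.comp_apply]
  induction G with
  | nil => rw [bf_nil, gammaCoproduct_one hΔm, dropLastTree_one, map_zero, map_zero]
  | cons s R ih =>
    obtain ⟨c⟩ := s
    have hdrop : gammaCoproduct Δ (dropLastTree t (bf (.node c :: R)))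
        = gammaCoproduct Δ (Bplus (bf c) * dropLastTree t (bf R)) := by
      rcases eq_or_ne R [] with rfl | hR
      · rw [bf_nil, dropLastTree_one, mul_zero, ← List.nil_append [_],
          dropLastTree_bf_append_singleton]
        split_ifs <;> simp [bf_nil, gammaCoproduct_one hΔm]
      · rw [Bplus_bf, ← List.singleton_append, dropLastTree_bf_append _ _ hR]
    have hcomp : dropLastTree t ∘ₗ counitH.smulRight (bf R)
        = counitH.smulRight (dropLastTree t (bf R)) := LinearMap.ext fun _ => by simp
    rw [hdrop, bf_node_cons, gammaCoproduct_Bplus_mul hΔm hΔB, gammaCoproduct_Bplus_mul hΔm hΔB,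
      map_add, lTensor_tmul_one_mul, ih, ← LinearMap.lTensor_comp_apply, hcomp]

end Coproduct

section Pairing

variable {Δ : H →ₗ[ℚ] H ⊗[ℚ] H} {p : H →ₗ[ℚ] H →ₗ[ℚ] ℚ}

theorem pairing_one_bf (hp1 : ∀ x : H, p 1 x = x.coeff (1 : Forest)) (G : Forest) :
    p 1 (bf G) = if [] = G then 1 else 0 := by
  rw [hp1, ← counitH_apply, counitH_bf]
  simp only [eq_comm]

theorem eq_of_pairing_bf_eq (hpnd : ∀ x : H, (∀ y : H, p x y = 0) → x = 0) {x x' : H}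
    (h : ∀ G, p x (bf G) = p x' (bf G)) : x = x' := by
  have hpx : p x = p x' := linearMap_ext_bf h
  exact sub_eq_zero.mp (hpnd _ fun y => by rw [map_sub, hpx, sub_self, LinearMap.zero_apply])

theorem pairing_Bplus_mul
    (hpm : ∀ x y z : H, p (x * y) z = TensorProduct.lift ((p y).smulRight (p x)) (Δ z))
    (hpB : ∀ x y : H, p (Bplus x) y = p x (gammaH y)) (x w : H) :
    p (Bplus x * w) = TensorProduct.lift ((p w).smulRight (p x)) ∘ₗ gammaCoproduct Δ := by
  have hB : p (Bplus x) = p x ∘ₗ gammaH := LinearMap.ext (hpB x)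
  refine LinearMap.ext fun y => ?_
  rw [hpm, hB, lift_smulRight_comp]
  rfl

variable
  (hΔm : ∀ x y : H, Δ (x * y) = (x ⊗ₜ (1 : H)) * Δ y + Δ x * ((1 : H) ⊗ₜ y) - x ⊗ₜ y)
  (hΔB : ∀ x : H, Δ (Bplus x) = (Bplus x) ⊗ₜ 1 + (LinearMap.lTensor H Bplus) (Δ x))
  (hp1 : ∀ x : H, p 1 x = x.coeff (1 : Forest))
  (hpm : ∀ x y z : H, p (x * y) z = TensorProduct.lift ((p y).smulRight (p x)) (Δ z))
  (hpB : ∀ x y : H, p (Bplus x) y = p x (gammaH y))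
  {f : Forest → H} (hf : ∀ F G : Forest, p (f F) (bf G) = if F = G then 1 else 0)

include hΔm hΔB hp1 hpm hpB hf

theorem pairing_glH_bf (t : PTree) :
    ∀ K : Forest, p (glH (f [t]) (bf K)) = p (bf K) ∘ₗ dropLastTree t
  | [] => linearMap_ext_bf fun G => by
      rw [bf_nil, glH_one, hf, LinearMap.comp_apply, dropLastTree_dual (pairing_one_bf hp1)]
      rfl
  | .node c :: rest => by
      rw [glH_bf_cons, pairing_Bplus_mul hpm hpB, pairing_glH_bf t c, lift_smulRight_comp,
        LinearMap.comp_assoc, lTensor_dropLastTree_comp_gammaCoproduct hΔm hΔB, bf_node_cons,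
        pairing_Bplus_mul hpm hpB, LinearMap.comp_assoc]

theorem pairing_glH (t : PTree) (x : H) : p (glH (f [t]) x) = p x ∘ₗ dropLastTree t := by
  have h : p ∘ₗ glH (f [t]) = LinearMap.lcomp ℚ ℚ (dropLastTree t) ∘ₗ p :=
    linearMap_ext_bf (pairing_glH_bf hΔm hΔB hp1 hpm hpB hf t)
  exact LinearMap.congr_fun h x

end Pairing

open scoped Classical in
theorem dual_basis_graftLeaf_general (Δ : H →ₗ[ℚ] H ⊗[ℚ] H)
    (hΔm : ∀ x y : H, Δ (x * y) = (x ⊗ₜ (1 : H)) * Δ y + Δ x * ((1 : H) ⊗ₜ y) - x ⊗ₜ y)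
    (hΔB : ∀ x : H, Δ (Bplus x) = (Bplus x) ⊗ₜ 1 + (LinearMap.lTensor H Bplus) (Δ x))
    (p : H →ₗ[ℚ] H →ₗ[ℚ] ℚ)
    (hp1 : ∀ x : H, p 1 x = x.coeff (1 : Forest))
    (hpm : ∀ x y z : H,
      p (x * y) z = TensorProduct.lift ((p y).smulRight (p x)) (Δ z))
    (hpB : ∀ x y : H, p (Bplus x) y = p x (gammaH y))
    (hpnd : ∀ x : H, (∀ y : H, p x y = 0) → x = 0)
    (f : Forest → H)
    (hf : ∀ F G : Forest, p (f F) (bf G) = if F = G then 1 else 0) :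
    ∀ L : List PTree, L ≠ [] →
      f L = ((L.map fun t => f [t]).reverse).foldr (fun u v => glH u v) 1 := by
  intro L _
  set graftProduct : Forest → H :=
    fun L => ((L.map fun t => f [t]).reverse).foldr (fun u v => glH u v) 1
  have hdual (K G : Forest) : p (graftProduct K) (bf G) = if K = G then 1 else 0 := by
    induction K using List.reverseRecOn generalizing G with
    | nil => exact pairing_one_bf hp1 G
    | append_singleton K t ih =>
      have hstep : graftProduct (K ++ [t]) = glH (f [t]) (graftProduct K) := by
        simp [graftProduct]
      rw [hstep, pairing_glH hΔm hΔB hp1 hpm hpB hf, LinearMap.comp_apply]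
      exact dropLastTree_dual ih t G
  exact eq_of_pairing_bf_eq hpnd fun G => by rw [hf, hdual]

open scoped Classical in
/-- For the nondegenerate pairing `⟨−,−⟩` of the infinitesimal Hopf algebra `H`
(characterized by `⟨1,x⟩ = ε(x)`, `⟨xy,z⟩ = ⟨y⊗x,Δ(z)⟩`, `⟨B⁺(x),y⟩ = ⟨x,γ(y)⟩`)
and its dual basis `(f_F)` (`⟨f_F, G⟩ = δ_{F,G}`), one has, for all trees
`t_1, …, t_n`:  `f_{t_1 t_2 … t_n} = f_{t_n} ↗ f_{t_{n−1}} ↗ … ↗ f_{t_1}`. -/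
theorem dual_basis_graftLeaf (Δ : H →ₗ[ℚ] H ⊗[ℚ] H)
    (hΔ1 : Δ 1 = 1 ⊗ₜ 1)
    (hΔm : ∀ x y : H, Δ (x * y) = (x ⊗ₜ (1 : H)) * Δ y + Δ x * ((1 : H) ⊗ₜ y) - x ⊗ₜ y)
    (hΔB : ∀ x : H, Δ (Bplus x) = (Bplus x) ⊗ₜ 1 + (LinearMap.lTensor H Bplus) (Δ x))
    (p : H →ₗ[ℚ] H →ₗ[ℚ] ℚ)
    (hp1 : ∀ x : H, p 1 x = x.coeff (1 : Forest))
    (hpm : ∀ x y z : H,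
      p (x * y) z = TensorProduct.lift ((p y).smulRight (p x)) (Δ z))
    (hpB : ∀ x y : H, p (Bplus x) y = p x (gammaH y))
    (hpnd : ∀ x : H, (∀ y : H, p x y = 0) → x = 0)
    (f : Forest → H)
    (hf : ∀ F G : Forest, p (f F) (bf G) = if F = G then 1 else 0) :
    ∀ L : List PTree, L ≠ [] →
      f L = ((L.map fun t => f [t]).reverse).foldr (fun u v => glH u v) 1 :=
  dual_basis_graftLeaf_general Δ hΔm hΔB p hp1 hpm hpB hpnd f hf
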